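/- Let v : X → ℝ satisfy v(x) ≥ 0 for all x, and let f ∈ L(X°), g ∈ L(∂X). Define P̃(x,y) = P(x,y)/(1+v(x)) and f̃(x) = f(x)/(1+v(x)) for x ∈ X°. Then I_{X°} − P̃_{X°} is invertible, and there is a unique u ∈ L(X) such that Δu − v·u = f on X° and u = g on ∂X; it is given by u_{X°} = −G̃_{X°}( f̃ − P̃_{X°,∂X} g ) with G̃_{X°} = (I_{X°} − P̃_{X°})^{-1}, and u_{∂X} = g. -/
import Mathlib


open Matrix Finset

/-- The Laplacian `Δu = Pu − u` acting on complex functions. -/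
noncomputable def lap {X : Type*} [Fintype X] (P : Matrix X X ℝ) (u : X → ℂ) (x : X) : ℂ :=
  (∑ y, (P x y : ℂ) * u y) - u x

/-- The transition matrix associated with a potential: `P̃(x,y) = P(x,y)/(1+v(x))`. -/
noncomputable def Ppot {X : Type*} (P : Matrix X X ℝ) (v : X → ℝ) : Matrix X X ℝ :=
  Matrix.of fun x y => P x y / (1 + v x)

/-- The `A × A` submatrix of `P`. -/
def subMatrix {X : Type*} (P : Matrix X X ℝ) (A : Finset X) : Matrix A A ℝ :=
  Matrix.of fun x y => P x.1 y.1

lemma pow_entry_nonneg {X : Type*} [Fintype X] [DecidableEq X] (P : Matrix X X ℝ)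
    (h : ∀ x y, 0 ≤ P x y) : ∀ n x y, 0 ≤ (P ^ n) x y := by
  intro n
  induction n with
  | zero => intro x y; by_cases hxy : x = y <;> simp [pow_zero, Matrix.one_apply, hxy]
  | succ n ih =>
    intro x y
    rw [pow_succ, Matrix.mul_apply]
    exact Finset.sum_nonneg fun c _ => mul_nonneg (ih x c) (h c y)

lemma unit_lemma {X : Type*} [Fintype X] [DecidableEq X] (P : Matrix X X ℝ)
    (hnonneg : ∀ x y, 0 ≤ P x y)
    (hrow : ∀ x, ∑ y, P x y = 1)
    (hirr : ∀ x y, ∃ n, 1 ≤ n ∧ 0 < (P ^ n) x y)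
    (v : X → ℝ) (hv : ∀ x, 0 ≤ v x)
    (Bnd : Finset X) (hB : Bnd.Nonempty) :
    IsUnit (1 - subMatrix (Ppot P v) Bndᶜ) := by
  set Q := subMatrix (Ppot P v) Bndᶜ with hQdef
  have hvpos : ∀ x, (0:ℝ) < 1 + v x := fun x => by have := hv x; linarith
  have hQnonneg : ∀ x y, 0 ≤ Q x y := fun x y =>
    div_nonneg (hnonneg x.1 y.1) (hvpos x.1).le
  have hker : ∀ w : ↥Bndᶜ → ℝ, (1 - Q) *ᵥ w = 0 → w = 0 := by
    intro w hw
    have heq : ∀ x, w x = ∑ y, Q x y * w y := by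
      intro x
      have h := congrFun hw x
      rw [Matrix.sub_mulVec, Matrix.one_mulVec] at h
      simp only [Pi.sub_apply, Pi.zero_apply, sub_eq_zero] at h
      exact h
    funext x₀
    have hne : (Finset.univ : Finset ↥Bndᶜ).Nonempty := ⟨x₀, Finset.mem_univ _⟩
    set M : ℝ := Finset.univ.sup' hne (fun y => |w y|) with hM
    have hle : ∀ y : ↥Bndᶜ, |w y| ≤ M := fun y =>
      Finset.le_sup' (fun y => |w y|) (Finset.mem_univ y)
    have hM0 : 0 ≤ M := le_trans (abs_nonneg _) (hle x₀)
    rcases eq_or_lt_of_le hM0 with hM0' | hMpos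
    · simp only [Pi.zero_apply]
      have h := hle x₀
      rw [← hM0'] at h
      exact abs_eq_zero.mp (le_antisymm h (abs_nonneg _))
    · exfalso
      set S : Set X := {z | ∃ h : z ∈ Bndᶜ, |w ⟨z, h⟩| = M} with hS
      have hstep : ∀ z ∈ S, ∀ y, 0 < P z y → y ∈ S := by
        rintro z ⟨hz, hzM⟩ y hPy
        have hsum1 : ∑ y : ↥Bndᶜ, Q ⟨z, hz⟩ y = (∑ y ∈ Bndᶜ, P z y) / (1 + v z) := by
          rw [Finset.sum_div, ← Finset.sum_coe_sort Bndᶜ (fun y => P z y / (1 + v z))]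
          rfl
        have hPle : ∑ y ∈ Bndᶜ, P z y ≤ 1 := by
          calc ∑ y ∈ Bndᶜ, P z y ≤ ∑ y, P z y :=
                Finset.sum_le_sum_of_subset_of_nonneg (Finset.subset_univ _)
                  (fun i _ _ => hnonneg z i)
            _ = 1 := hrow z
        have hrowQ : ∑ y : ↥Bndᶜ, Q ⟨z, hz⟩ y ≤ 1 := by
          rw [hsum1, div_le_one (hvpos z)]
          linarith [hv z]
        have htri : M ≤ ∑ y : ↥Bndᶜ, Q ⟨z, hz⟩ y * |w y| := by
          calc M = |w ⟨z, hz⟩| := hzM.symm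
            _ = |∑ y, Q ⟨z, hz⟩ y * w y| := by rw [← heq]
            _ ≤ ∑ y, |Q ⟨z, hz⟩ y * w y| := Finset.abs_sum_le_sum_abs _ _
            _ = ∑ y, Q ⟨z, hz⟩ y * |w y| := by
                refine Finset.sum_congr rfl fun y _ => ?_
                rw [abs_mul, abs_of_nonneg (hQnonneg _ _)]
        have hsum_le : ∑ y : ↥Bndᶜ, Q ⟨z, hz⟩ y * |w y| ≤ (∑ y : ↥Bndᶜ, Q ⟨z, hz⟩ y) * M := by
          rw [Finset.sum_mul]
          exact Finset.sum_le_sum fun y _ =>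
            mul_le_mul_of_nonneg_left (hle y) (hQnonneg _ _)
        have hrow1 : ∑ y : ↥Bndᶜ, Q ⟨z, hz⟩ y = 1 := by
          by_contra hne1
          have hlt : ∑ y : ↥Bndᶜ, Q ⟨z, hz⟩ y < 1 := lt_of_le_of_ne hrowQ hne1
          have : M < M :=
            calc M ≤ (∑ y : ↥Bndᶜ, Q ⟨z, hz⟩ y) * M := le_trans htri hsum_le
              _ < 1 * M := mul_lt_mul_of_pos_right hlt hMpos
              _ = M := one_mul M
          exact lt_irrefl _ this
        have hsumP : ∑ y ∈ Bndᶜ, P z y = 1 + v z := by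
          rw [hsum1, div_eq_one_iff_eq (ne_of_gt (hvpos z))] at hrow1
          exact hrow1
        have hbnd0 : ∀ b ∈ Bnd, P z b = 0 := by
          have hsplit : ∑ y ∈ Bndᶜ, P z y + ∑ y ∈ Bnd, P z y = ∑ y, P z y := by
            rw [Finset.sum_compl_add_sum]
          have hz0 : ∑ y ∈ Bnd, P z y = 0 := by
            have h1 := hrow z
            nlinarith [hv z, hPle]
          intro b hb
          exact (Finset.sum_eq_zero_iff_of_nonneg (fun i _ => hnonneg z i)).mp hz0 b hb
        have hyB : y ∈ Bndᶜ := by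
          rw [Finset.mem_compl]
          intro hy
          exact absurd (hbnd0 y hy) (ne_of_gt hPy)
        -- equality case
        have hterms : ∀ c : ↥Bndᶜ, 0 ≤ Q ⟨z, hz⟩ c * (M - |w c|) := fun c =>
          mul_nonneg (hQnonneg _ _) (by linarith [hle c])
        have hT : ∑ c : ↥Bndᶜ, Q ⟨z, hz⟩ c * (M - |w c|) ≤ 0 := by
          have hexp : ∑ c : ↥Bndᶜ, Q ⟨z, hz⟩ c * (M - |w c|)
              = (∑ c : ↥Bndᶜ, Q ⟨z, hz⟩ c) * M - ∑ c : ↥Bndᶜ, Q ⟨z, hz⟩ c * |w c| := by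
            rw [Finset.sum_mul, ← Finset.sum_sub_distrib]
            exact Finset.sum_congr rfl fun c _ => by ring
          rw [hexp, hrow1, one_mul]
          linarith
        have hallzero := (Finset.sum_eq_zero_iff_of_nonneg
          (fun c _ => hterms c)).mp (le_antisymm hT (Finset.sum_nonneg fun c _ => hterms c))
        have hQpos : 0 < Q ⟨z, hz⟩ ⟨y, hyB⟩ := div_pos hPy (hvpos z)
        have hyM : |w ⟨y, hyB⟩| = M := by
          have := hallzero ⟨y, hyB⟩ (Finset.mem_univ _)
          rcases mul_eq_zero.mp this with h | h
          · exact absurd h (ne_of_gt hQpos)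
          · linarith [h]
        exact ⟨hyB, hyM⟩
      -- n-step closure
      have hnstep : ∀ n, ∀ z ∈ S, ∀ y, 0 < (P ^ (n + 1)) z y → y ∈ S := by
        intro n
        induction n with
        | zero => intro z hz y hy; rw [pow_one] at hy; exact hstep z hz y hy
        | succ n ih =>
          intro z hz y hy
          rw [pow_succ, Matrix.mul_apply] at hy
          obtain ⟨c, _, hc⟩ : ∃ c ∈ Finset.univ, 0 < (P ^ (n + 1)) z c * P c y := by
            by_contra hcon
            push_neg at hcon
            have : ∑ c, (P ^ (n + 1)) z c * P c y ≤ 0 :=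
              Finset.sum_nonpos fun c hc => hcon c hc
            linarith
          have hc1 : 0 < (P ^ (n + 1)) z c := by
            rcases lt_or_ge 0 ((P ^ (n + 1)) z c) with h | h
            · exact h
            · nlinarith [pow_entry_nonneg P hnonneg (n+1) z c, hnonneg c y]
          have hc2 : 0 < P c y := by
            nlinarith [pow_entry_nonneg P hnonneg (n+1) z c, hnonneg c y]
          exact hstep c (ih z hz c hc1) y hc2
      -- find max point, then contradiction with boundary
      obtain ⟨z₀, _, hz₀⟩ := Finset.exists_mem_eq_sup' hne (fun y : ↥Bndᶜ => |w y|)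
      have hz₀S : (z₀ : X) ∈ S := ⟨z₀.2, hz₀.symm⟩
      obtain ⟨b, hb⟩ := hB
      obtain ⟨n, hn1, hnpos⟩ := hirr z₀ b
      obtain ⟨m, rfl⟩ := Nat.exists_eq_add_of_le hn1
      have hbS : b ∈ S := hnstep m z₀ hz₀S b (by rwa [Nat.add_comm] at hnpos)
      obtain ⟨hbc, -⟩ := hbS
      exact (Finset.mem_compl.mp hbc) hb
  have hinj : Function.Injective (1 - Q).mulVec := by
    intro w1 w2 h
    have h0 := hker (w1 - w2) (by rw [Matrix.mulVec_sub, h, sub_self])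
    exact sub_eq_zero.mp h0
  exact Matrix.mulVec_injective_iff_isUnit.mp hinj

/-- Dirichlet problem with potential `v ≥ 0`: `I_{X°} − P̃_{X°}` is
invertible and the problem `Δu − v·u = f` on `X°`, `u = g` on `∂X` has a unique
solution, given by `u_{X°} = −G̃_{X°}(f̃ − P̃_{X°,∂X} g)`. -/
theorem dirichlet_with_potential {X : Type*} [Fintype X] [DecidableEq X]
    (P : Matrix X X ℝ)
    (hcard : 1 < Fintype.card X)
    (hnonneg : ∀ x y, 0 ≤ P x y)
    (hrow : ∀ x, ∑ y, P x y = 1)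
    (hirr : ∀ x y, ∃ n, 1 ≤ n ∧ 0 < (P ^ n) x y)
    (v : X → ℝ) (hv : ∀ x, 0 ≤ v x)
    (Bnd : Finset X) (hB : Bnd.Nonempty) (hB' : Bnd ≠ Finset.univ)
    (f g : X → ℂ) :
    IsUnit (1 - subMatrix (Ppot P v) Bndᶜ) ∧
    (∃! u : X → ℂ,
      (∀ x, x ∉ Bnd → lap P u x - (v x : ℂ) * u x = f x) ∧ (∀ x ∈ Bnd, u x = g x)) ∧
    (∀ u : X → ℂ,
      ((∀ x, x ∉ Bnd → lap P u x - (v x : ℂ) * u x = f x) ∧ (∀ x ∈ Bnd, u x = g x)) →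
      ∀ x, ∀ hx : x ∈ Bndᶜ,
        u x = -∑ y : ↥Bndᶜ,
          (((1 - subMatrix (Ppot P v) Bndᶜ)⁻¹ ⟨x, hx⟩ y : ℝ) : ℂ) *
            ((f y.1 / ((1 + v y.1 : ℝ) : ℂ)) -
              ∑ z : ↥Bnd, ((Ppot P v y.1 z.1 : ℝ) : ℂ) * g z.1)) := by
  have hvpos : ∀ x, (0:ℝ) < 1 + v x := fun x => by have := hv x; linarith
  set Q := subMatrix (Ppot P v) Bndᶜ with hQdef
  have hU : IsUnit (1 - Q) := unit_lemma P hnonneg hrow hirr v hv Bnd hB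
  have hdet : IsUnit (1 - Q).det := (Matrix.isUnit_iff_isUnit_det _).mp hU
  -- complex version
  set Ac : Matrix ↥Bndᶜ ↥Bndᶜ ℂ := (1 - Q).map Complex.ofReal with hAc
  have hAc_eq : Ac = (Complex.ofRealHom.mapMatrix : Matrix ↥Bndᶜ ↥Bndᶜ ℝ →+* _) (1 - Q) := rfl
  have hUc : IsUnit Ac := by rw [hAc_eq]; exact hU.map _
  have hdetc : IsUnit Ac.det := (Matrix.isUnit_iff_isUnit_det _).mp hUc
  have hinvmap : Ac⁻¹ = ((1 - Q)⁻¹).map Complex.ofReal := by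
    apply Matrix.inv_eq_left_inv
    have h1 : (1 - Q)⁻¹ * (1 - Q) = 1 := Matrix.nonsing_inv_mul _ hdet
    have hmul : ((1 - Q)⁻¹ * (1 - Q)).map Complex.ofReal
        = (1 - Q)⁻¹.map Complex.ofReal * (1 - Q).map Complex.ofReal :=
      Matrix.map_mul (f := Complex.ofRealHom)
    rw [hAc, ← hmul, h1, Matrix.map_one _ Complex.ofReal_zero Complex.ofReal_one]
  -- the vector b
  set b : ↥Bndᶜ → ℂ := fun y => f y.1 / ((1 + v y.1 : ℝ) : ℂ) -
      ∑ z : ↥Bnd, ((Ppot P v y.1 z.1 : ℝ) : ℂ) * g z.1 with hb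
  -- apply formula for Ac
  have hAc_apply : ∀ (w : ↥Bndᶜ → ℂ) (x : ↥Bndᶜ),
      (Ac *ᵥ w) x = w x - ∑ y : ↥Bndᶜ, ((Q x y : ℝ) : ℂ) * w y := by
    intro w x
    show ∑ y : ↥Bndᶜ, (((1 - Q) x y : ℝ) : ℂ) * w y = _
    have : ∀ y : ↥Bndᶜ, (((1 - Q) x y : ℝ) : ℂ) * w y
        = ((1 : Matrix ↥Bndᶜ ↥Bndᶜ ℝ) x y : ℂ) * w y - ((Q x y : ℝ) : ℂ) * w y := by
      intro y
      rw [Matrix.sub_apply]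
      push_cast
      ring
    rw [Finset.sum_congr rfl fun y _ => this y, Finset.sum_sub_distrib]
    congr 1
    rw [Finset.sum_eq_single x]
    · simp [Matrix.one_apply]
    · intro y _ hy
      simp [Matrix.one_apply, (Ne.symm hy)]
    · intro h; exact absurd (Finset.mem_univ x) h
  -- the pointwise equivalence
  have hEquiv : ∀ (u : X → ℂ), (∀ x ∈ Bnd, u x = g x) → ∀ (x : X) (hx : x ∈ Bndᶜ),
      ((lap P u x - (v x : ℂ) * u x = f x) ↔
        (u x - ∑ y : ↥Bndᶜ, ((Q ⟨x, hx⟩ y : ℝ) : ℂ) * u y.1 = -b ⟨x, hx⟩)) := by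
    intro u hg x hx
    have hc : ((1 + v x : ℝ) : ℂ) ≠ 0 := by
      exact_mod_cast ne_of_gt (hvpos x)
    -- rewrite lap equation multiplied out
    have lhs_eq : lap P u x - (v x : ℂ) * u x
        = (∑ y, (P x y : ℂ) * u y) - ((1 + v x : ℝ) : ℂ) * u x := by
      rw [lap]; push_cast; ring
    -- sum split identity
    have hsplit : ∑ y, ((Ppot P v x y : ℝ) : ℂ) * u y
        = (∑ y : ↥Bndᶜ, ((Q ⟨x, hx⟩ y : ℝ) : ℂ) * u y.1)
          + ∑ z : ↥Bnd, ((Ppot P v x z.1 : ℝ) : ℂ) * g z.1 := by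
      rw [← Finset.sum_compl_add_sum Bnd (fun y => ((Ppot P v x y : ℝ) : ℂ) * u y)]
      congr 1
      · rw [← Finset.sum_coe_sort Bndᶜ (fun y => ((Ppot P v x y : ℝ) : ℂ) * u y)]
        rfl
      · rw [← Finset.sum_coe_sort Bnd (fun y => ((Ppot P v x y : ℝ) : ℂ) * u y)]
        exact Finset.sum_congr rfl fun z _ => by rw [hg z.1 z.2]
    have hPpot_cast : ∀ y, ((Ppot P v x y : ℝ) : ℂ) = (P x y : ℂ) / ((1 + v x : ℝ) : ℂ) := by
      intro y
      show ((P x y / (1 + v x) : ℝ) : ℂ) = _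
      push_cast
      ring
    have hsum : ∑ y, ((Ppot P v x y : ℝ) : ℂ) * u y
        = (∑ y, (P x y : ℂ) * u y) / ((1 + v x : ℝ) : ℂ) := by
      rw [Finset.sum_div]
      exact Finset.sum_congr rfl fun y _ => by rw [hPpot_cast y]; ring
    have key : ((∑ y, (P x y : ℂ) * u y) - ((1 + v x : ℝ) : ℂ) * u x = f x) ↔
        ((∑ y, ((Ppot P v x y : ℝ) : ℂ) * u y) - u x = f x / ((1 + v x : ℝ) : ℂ)) := by
      rw [hsum]
      have hstep : (∑ y, (P x y : ℂ) * u y) / ((1 + v x : ℝ) : ℂ) - u x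
          = ((∑ y, (P x y : ℂ) * u y) - ((1 + v x : ℝ) : ℂ) * u x) / ((1 + v x : ℝ) : ℂ) := by
        rw [sub_div, mul_div_cancel_left₀ _ hc]
      rw [hstep]
      constructor
      · intro h; rw [h]
      · intro h
        have h' := congrArg (fun t => t * ((1 + v x : ℝ) : ℂ)) h
        simp only [div_mul_cancel₀ _ hc] at h'
        exact h'
    rw [lhs_eq, key, hsplit, hb]
    simp only
    constructor <;> intro h <;> linear_combination -h
  -- system ↔ matrix equation
  have hsys : ∀ u : X → ℂ, (∀ x ∈ Bnd, u x = g x) →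
      ((∀ x, x ∉ Bnd → lap P u x - (v x : ℂ) * u x = f x) ↔
        Ac *ᵥ (fun y : ↥Bndᶜ => u y.1) = -b) := by
    intro u hg
    constructor
    · intro h
      funext y
      rw [hAc_apply]
      have := (hEquiv u hg y.1 y.2).mp (h y.1 (Finset.mem_compl.mp y.2))
      simpa using this
    · intro h x hx
      have hx' : x ∈ Bndᶜ := Finset.mem_compl.mpr hx
      apply (hEquiv u hg x hx').mpr
      have := congrFun h ⟨x, hx'⟩
      rw [hAc_apply] at this
      simpa using this
  -- the candidate solution
  set w₀ : ↥Bndᶜ → ℂ := Ac⁻¹ *ᵥ (-b) with hw₀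
  set u₀ : X → ℂ := fun x => if hx : x ∈ Bndᶜ then w₀ ⟨x, hx⟩ else g x with hu₀
  have hu₀bnd : ∀ x ∈ Bnd, u₀ x = g x := by
    intro x hx
    rw [hu₀]
    simp only
    rw [dif_neg (by simpa using hx)]
  have hu₀w : (fun y : ↥Bndᶜ => u₀ y.1) = w₀ := by
    funext y
    rw [hu₀]
    simp only
    rw [dif_pos y.2]
  have hu₀sys : ∀ x, x ∉ Bnd → lap P u₀ x - (v x : ℂ) * u₀ x = f x := by
    apply (hsys u₀ hu₀bnd).mpr
    rw [hu₀w, hw₀, Matrix.mulVec_mulVec, Matrix.mul_nonsing_inv _ hdetc, Matrix.one_mulVec]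
  refine ⟨hU, ⟨u₀, ⟨hu₀sys, hu₀bnd⟩, ?_⟩, ?_⟩
  · -- uniqueness
    rintro u ⟨hu1, hu2⟩
    have h1 : Ac *ᵥ (fun y : ↥Bndᶜ => u y.1) = -b := (hsys u hu2).mp hu1
    have h2 : Ac *ᵥ (fun y : ↥Bndᶜ => u₀ y.1) = -b := (hsys u₀ hu₀bnd).mp hu₀sys
    have hinj : Function.Injective Ac.mulVec := Matrix.mulVec_injective_iff_isUnit.mpr hUc
    have hw : (fun y : ↥Bndᶜ => u y.1) = (fun y : ↥Bndᶜ => u₀ y.1) := hinj (h1.trans h2.symm)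
    funext x
    by_cases hx : x ∈ Bnd
    · rw [hu2 x hx, hu₀bnd x hx]
    · exact congrFun hw ⟨x, Finset.mem_compl.mpr hx⟩
  · -- formula
    rintro u ⟨hu1, hu2⟩ x hx
    have h1 : Ac *ᵥ (fun y : ↥Bndᶜ => u y.1) = -b := (hsys u hu2).mp hu1
    have h2 : (fun y : ↥Bndᶜ => u y.1) = Ac⁻¹ *ᵥ (-b) := by
      have := congrArg (Ac⁻¹ *ᵥ ·) h1
      simpa [Matrix.mulVec_mulVec, Matrix.nonsing_inv_mul _ hdetc, Matrix.one_mulVec] using this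
    have h3 := congrFun h2 ⟨x, hx⟩
    simp only at h3
    rw [h3, Matrix.mulVec_neg, Pi.neg_apply, hinvmap]
    show -(∑ y : ↥Bndᶜ, (((1 - Q)⁻¹ ⟨x, hx⟩ y : ℝ) : ℂ) * b y) = _
    rfl
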